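/- For all real numbers s, s' ≥ 0, one has |g(s) − g(s')| ≤ |s − s'| + √(2/π)·|√s − √(s')|. -/

import Mathlib

open MeasureTheory ProbabilityTheory
open scoped ENNReal NNReal

lemma hasDerivAt_tanh' (x : ℝ) : HasDerivAt Real.tanh (1 / Real.cosh x ^ 2) x := by
  have h := (Real.hasDerivAt_sinh x).div (Real.hasDerivAt_cosh x) (Real.cosh_pos x).ne'
  have hfun : (Real.sinh / Real.cosh) = Real.tanh := by
    funext y; rw [Real.tanh_eq_sinh_div_cosh]; rfl
  rw [hfun] at h
  refine h.congr_deriv ?_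
  have := Real.cosh_sq_sub_sinh_sq x
  rw [div_left_inj' (by positivity)]
  nlinarith [this]

lemma continuous_tanh' : Continuous Real.tanh := by
  have : Real.tanh = fun x => Real.sinh x / Real.cosh x := by
    funext x; exact Real.tanh_eq_sinh_div_cosh x
  rw [this]
  exact Real.continuous_sinh.div Real.continuous_cosh fun x => (Real.cosh_pos x).ne'

lemma abs_tanh_le (x : ℝ) : |Real.tanh x| ≤ 1 := by
  rw [Real.tanh_eq_sinh_div_cosh, abs_div, abs_of_pos (Real.cosh_pos x),
    div_le_one (Real.cosh_pos x)]
  nlinarith [Real.cosh_sq_sub_sinh_sq x, abs_nonneg (Real.sinh x), sq_abs (Real.sinh x),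
    Real.cosh_pos x]

lemma tanh_lipschitz (a b : ℝ) : |Real.tanh a - Real.tanh b| ≤ |a - b| := by
  have h : LipschitzWith 1 Real.tanh := by
    apply lipschitzWith_of_nnnorm_deriv_le
    · exact fun x => (hasDerivAt_tanh' x).differentiableAt
    · intro x
      rw [(hasDerivAt_tanh' x).deriv]
      have h1 : (1:ℝ) ≤ Real.cosh x ^ 2 := by nlinarith [Real.one_le_cosh x]
      have : ‖(1:ℝ) / Real.cosh x ^ 2‖ ≤ 1 := by
        rw [Real.norm_eq_abs, abs_of_nonneg (by positivity)]
        rw [div_le_one (by positivity)]; exact h1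
      exact_mod_cast this
  have := h.dist_le_mul a b
  simpa [Real.dist_eq] using this

lemma integral_Ioi_mul_exp : ∫ x in Set.Ioi (0:ℝ), x * Real.exp (-(1/2) * x ^ 2) = 1 := by
  have A : ∀ x : ℝ, HasDerivAt (fun y => -Real.exp (-(1/2) * y ^ 2))
      (x * Real.exp (-(1/2) * x ^ 2)) x := by
    intro x
    have := (((hasDerivAt_pow 2 x).const_mul (-(1/2 : ℝ))).exp).neg
    refine this.congr_deriv ?_
    rw [show (2:ℕ) - 1 = 1 from rfl]
    ring
  have B : Filter.Tendsto (fun y : ℝ => -Real.exp (-(1/2) * y ^ 2)) Filter.atTop (nhds 0) := by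
    rw [show (0:ℝ) = -0 by ring]
    refine Filter.Tendsto.neg ?_
    apply Real.tendsto_exp_atBot.comp
    exact (Filter.tendsto_pow_atTop two_ne_zero).const_mul_atTop_of_neg (by norm_num)
  have hint : IntegrableOn (fun x : ℝ => x * Real.exp (-(1/2) * x ^ 2)) (Set.Ioi 0) :=
    (integrable_mul_exp_neg_mul_sq (by norm_num : (0:ℝ) < 1/2)).integrableOn
  have := integral_Ioi_of_hasDerivAt_of_tendsto' (fun x _ => A x) hint B
  simp at this
  simpa using this

lemma integrable_abs_mul_pdf : Integrable (fun x : ℝ =>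
    gaussianPDFReal 0 1 x * |x|) := by
  have h := (integrable_mul_exp_neg_mul_sq (by norm_num : (0:ℝ) < 1/2)).abs
  have h2 : Integrable (fun x : ℝ => |x| * Real.exp (-(1/2) * x ^ 2)) := by
    refine h.congr (Filter.Eventually.of_forall fun x => ?_)
    simp [abs_mul, abs_of_nonneg (Real.exp_pos x).le]
  refine (h2.const_mul ((Real.sqrt (2 * Real.pi))⁻¹)).congr
    (Filter.Eventually.of_forall fun x => ?_)
  simp only [gaussianPDFReal]
  push_cast
  ring_nf

lemma pdf_eq (x : ℝ) : gaussianPDFReal 0 1 x =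
    (Real.sqrt (2 * Real.pi))⁻¹ * Real.exp (-(1/2) * x ^ 2) := by
  simp only [gaussianPDFReal]
  push_cast
  ring_nf

lemma integral_gaussianReal_eq (f : ℝ → ℝ) :
    ∫ x, f x ∂(gaussianReal 0 1) = ∫ x, gaussianPDFReal 0 1 x * f x := by
  rw [gaussianReal_of_var_ne_zero 0 one_ne_zero]
  have hpdf : gaussianPDF 0 1 = fun x => ((gaussianPDFReal 0 1 x).toNNReal : ℝ≥0∞) := by
    funext x; rfl
  rw [hpdf, integral_withDensity_eq_integral_smul
    ((measurable_gaussianPDFReal 0 1).real_toNNReal) f]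
  congr 1
  funext x
  rw [NNReal.smul_def, smul_eq_mul, Real.coe_toNNReal _ (gaussianPDFReal_nonneg 0 1 x)]

lemma integral_abs_gaussian :
    ∫ z, |z| ∂(gaussianReal 0 1) = Real.sqrt (2 / Real.pi) := by
  rw [integral_gaussianReal_eq]
  have : ∫ x : ℝ, gaussianPDFReal 0 1 x * |x| =
      (Real.sqrt (2 * Real.pi))⁻¹ * ∫ x : ℝ, |x| * Real.exp (-(1/2) * x ^ 2) := by
    rw [← integral_const_mul]
    congr 1; funext x; rw [pdf_eq]; ring
  rw [this]
  have habs : ∫ x : ℝ, |x| * Real.exp (-(1/2) * x ^ 2)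
      = 2 * ∫ x in Set.Ioi (0:ℝ), x * Real.exp (-(1/2) * x ^ 2) := by
    rw [← integral_comp_abs (f := fun y => y * Real.exp (-(1/2) * y ^ 2))]
    congr 1; funext x; rw [sq_abs]
  rw [habs, integral_Ioi_mul_exp]
  have h2 : Real.sqrt (2 * Real.pi) = Real.sqrt 2 * Real.sqrt Real.pi :=
    Real.sqrt_mul (by norm_num) _
  have h3 : Real.sqrt (2 / Real.pi) = Real.sqrt 2 / Real.sqrt Real.pi :=
    Real.sqrt_div (by norm_num) Real.pi
  have hs2 : Real.sqrt 2 * Real.sqrt 2 = 2 := Real.mul_self_sqrt (by norm_num)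
  have hpi : Real.sqrt Real.pi ≠ 0 := ne_of_gt (Real.sqrt_pos.mpr Real.pi_pos)
  have hs2' : Real.sqrt 2 ≠ 0 := ne_of_gt (Real.sqrt_pos.mpr (by norm_num))
  rw [h2, h3]
  field_simp
  linear_combination (-1 : ℝ) * hs2

/-- `g s = ∫ tanh(s + √s · z) dγ(z)` where `γ` is the standard Gaussian measure. -/
noncomputable def gaussTanh (s : ℝ) : ℝ :=
  ∫ z, Real.tanh (s + Real.sqrt s * z) ∂(gaussianReal 0 1)

lemma integrable_tanh_aff (a b : ℝ) :
    Integrable (fun z => Real.tanh (a + b * z)) (gaussianReal 0 1) := by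
  apply Integrable.mono' (integrable_const (1:ℝ))
  · exact (continuous_tanh'.comp (by continuity)).aestronglyMeasurable
  · refine Filter.Eventually.of_forall fun x => ?_
    rw [Real.norm_eq_abs]
    exact abs_tanh_le _

lemma integrable_abs_gaussian : Integrable (fun z : ℝ => |z|) (gaussianReal 0 1) := by
  rw [gaussianReal_of_var_ne_zero 0 one_ne_zero]
  have hpdf : gaussianPDF 0 1 = fun x => ((gaussianPDFReal 0 1 x).toNNReal : ℝ≥0∞) := by
    funext x; rfl
  rw [hpdf, integrable_withDensity_iff_integrable_smul
    ((measurable_gaussianPDFReal 0 1).real_toNNReal)]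
  refine integrable_abs_mul_pdf.congr (Filter.Eventually.of_forall fun x => ?_)
  show gaussianPDFReal 0 1 x * |x| = (gaussianPDFReal 0 1 x).toNNReal • |x|
  rw [NNReal.smul_def, smul_eq_mul, Real.coe_toNNReal _ (gaussianPDFReal_nonneg 0 1 x)]

theorem gaussTanh_lipschitz (s s' : ℝ) (hs : 0 ≤ s) (hs' : 0 ≤ s') :
    |gaussTanh s - gaussTanh s'| ≤
      |s - s'| + Real.sqrt (2 / Real.pi) * |Real.sqrt s - Real.sqrt s'| := by
  have h1 := integrable_tanh_aff s (Real.sqrt s)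
  have h2 := integrable_tanh_aff s' (Real.sqrt s')
  unfold gaussTanh
  rw [← integral_sub h1 h2]
  have hbound : Integrable (fun z : ℝ => |s - s'| + |Real.sqrt s - Real.sqrt s'| * |z|)
      (gaussianReal 0 1) :=
    (integrable_const _).add (integrable_abs_gaussian.const_mul _)
  calc |∫ z, (Real.tanh (s + Real.sqrt s * z) - Real.tanh (s' + Real.sqrt s' * z))
          ∂(gaussianReal 0 1)|
      ≤ ∫ z, |Real.tanh (s + Real.sqrt s * z) - Real.tanh (s' + Real.sqrt s' * z)|
          ∂(gaussianReal 0 1) := by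
        simpa [Real.norm_eq_abs] using
          norm_integral_le_integral_norm (μ := gaussianReal 0 1)
            (f := fun z => Real.tanh (s + Real.sqrt s * z) - Real.tanh (s' + Real.sqrt s' * z))
    _ ≤ ∫ z, (|s - s'| + |Real.sqrt s - Real.sqrt s'| * |z|) ∂(gaussianReal 0 1) := by
        refine integral_mono (h1.sub h2).abs hbound fun z => ?_
        calc |Real.tanh (s + Real.sqrt s * z) - Real.tanh (s' + Real.sqrt s' * z)|
            ≤ |(s + Real.sqrt s * z) - (s' + Real.sqrt s' * z)| := tanh_lipschitz _ _
          _ = |(s - s') + (Real.sqrt s - Real.sqrt s') * z| := by ring_nf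
          _ ≤ |s - s'| + |(Real.sqrt s - Real.sqrt s') * z| := abs_add_le _ _
          _ = |s - s'| + |Real.sqrt s - Real.sqrt s'| * |z| := by rw [abs_mul]
    _ = |s - s'| + Real.sqrt (2 / Real.pi) * |Real.sqrt s - Real.sqrt s'| := by
        rw [integral_add (integrable_const _) (integrable_abs_gaussian.const_mul _),
          integral_const, integral_const_mul, integral_abs_gaussian]
        simp [mul_comm]
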